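/- Let A, B be n×n complex positive definite matrices. Then the product AB has spectrum contained in (0,∞), and if (AB)^{1/2} denotes the unique square root of AB with positive spectrum, then the adjoint of (AB)^{1/2} equals (BA)^{1/2}. In particular (AB)^{1/2} + (BA)^{1/2} is Hermitian. -/

import Mathlib

/-! With `R = A^{1/2}`, the product `AB = R (RBR) R⁻¹` is similar to the positive definite
matrix `RBR`; hence its spectrum is positive and `R (RBR)^{1/2} R⁻¹` is a square root of `AB`
with positive spectrum. Two square roots `S`, `T` of the same matrix with positive spectra
coincide: `S (S - T) = (S - T) (-T)` while `σ(S)` and `σ(-T)` lie in opposite half-planes, so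
`S - T = 0` by Sylvester's theorem. Taking adjoints conjugates spectra and turns `(AB)ᴴ` into
`BA`. -/

open Matrix ComplexOrder

section OldSqrt

variable {m 𝕜 : Type*} [Fintype m] [RCLike 𝕜] [DecidableEq m]

/-- The positive semidefinite square root of a positive semidefinite matrix
(as defined in Mathlib of December 2024; removed since). -/
noncomputable def Matrix.PosSemidef.sqrt {A : Matrix m m 𝕜} (hA : A.PosSemidef) : Matrix m m 𝕜 :=
  hA.isHermitian.eigenvectorUnitary.1 * diagonal ((↑) ∘ (√·) ∘ hA.isHermitian.eigenvalues) *
  (star hA.isHermitian.eigenvectorUnitary : Matrix m m 𝕜)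

lemma Matrix.PosSemidef.posSemidef_sqrt {A : Matrix m m 𝕜} (hA : A.PosSemidef) :
    PosSemidef hA.sqrt := by
  have hd : PosSemidef (diagonal ((↑) ∘ (√·) ∘ hA.isHermitian.eigenvalues : m → 𝕜)) := by
    apply PosSemidef.diagonal
    intro i
    simp only [Pi.zero_apply, Function.comp_apply]
    exact RCLike.ofReal_nonneg.mpr (Real.sqrt_nonneg _)
  have h := hd.mul_mul_conjTranspose_same (hA.isHermitian.eigenvectorUnitary : Matrix m m 𝕜)
  simpa [Matrix.PosSemidef.sqrt, Matrix.star_eq_conjTranspose] using h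

end OldSqrt

namespace Heron

variable {n : ℕ}

def WeakMaj {n : ℕ} (x y : Fin n → ℝ) : Prop :=
  ∀ s : Finset (Fin n), ∃ t : Finset (Fin n),
    t.card = s.card ∧ ∑ i ∈ s, x i ≤ ∑ i ∈ t, y i

def Maj {n : ℕ} (x y : Fin n → ℝ) : Prop :=
  WeakMaj x y ∧ ∑ i, x i = ∑ i, y i

lemma sandwich_posSemidef {S T : Matrix (Fin n) (Fin n) ℂ} (hS : S.IsHermitian)
    (hT : T.PosSemidef) : (S * T * S).PosSemidef := by
  have h := hT.mul_mul_conjTranspose_same S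
  rwa [hS.eq] at h

noncomputable def geomMean {A B : Matrix (Fin n) (Fin n) ℂ}
    (hA : A.PosDef) (hB : B.PosDef) : Matrix (Fin n) (Fin n) ℂ :=
  hA.posSemidef.sqrt *
    (sandwich_posSemidef hA.posSemidef.posSemidef_sqrt.isHermitian.inv
        hB.posSemidef).sqrt *
    hA.posSemidef.sqrt

lemma geomMean_posSemidef {A B : Matrix (Fin n) (Fin n) ℂ}
    (hA : A.PosDef) (hB : B.PosDef) : (geomMean hA hB).PosSemidef :=
  sandwich_posSemidef hA.posSemidef.posSemidef_sqrt.isHermitian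
    (Matrix.PosSemidef.posSemidef_sqrt _)

noncomputable def specMean {A B : Matrix (Fin n) (Fin n) ℂ}
    (hA : A.PosDef) (hB : B.PosDef) : Matrix (Fin n) (Fin n) ℂ :=
  (geomMean_posSemidef hA.inv hB).sqrt * A * (geomMean_posSemidef hA.inv hB).sqrt

def HasPosSpectrum (M : Matrix (Fin n) (Fin n) ℂ) : Prop :=
  ∀ z ∈ spectrum ℂ M, 0 < z.re ∧ z.im = 0

def IsPrincipalSqrt (M S : Matrix (Fin n) (Fin n) ℂ) : Prop :=
  S * S = M ∧ HasPosSpectrum S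

noncomputable def absMat (Y : Matrix (Fin n) (Fin n) ℂ) : Matrix (Fin n) (Fin n) ℂ :=
  (Matrix.posSemidef_conjTranspose_mul_self Y).sqrt

noncomputable def posPart (H : Matrix (Fin n) (Fin n) ℂ) : Matrix (Fin n) (Fin n) ℂ :=
  ((1 : ℂ) / 2) • (absMat H + H)

end Heron

open Polynomial in
theorem SemiconjBy.aeval {R A : Type*} [CommSemiring R] [Semiring A] [Algebra R A] {x a b : A}
    (h : SemiconjBy x a b) (p : R[X]) : SemiconjBy x (aeval a p) (aeval b p) := by
  induction p using Polynomial.induction_on' with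
  | add p q hp hq => simpa only [map_add] using hp.add_right hq
  | monomial k c =>
    simpa only [aeval_monomial] using
      SemiconjBy.mul_right (Algebra.commute_algebraMap_right c x) (h.pow_right k)

open Polynomial in
theorem Matrix.eq_zero_of_mul_eq_mul_of_disjoint_spectrum {ι K : Type*} [Fintype ι]
    [DecidableEq ι] [Field K] [IsAlgClosed K] {S T X : Matrix ι ι K}
    (hST : Disjoint (spectrum K S) (spectrum K T)) (hX : S * X = X * T) : X = 0 := by
  cases isEmpty_or_nonempty ι
  · exact Subsingleton.elim X 0
  -- `χ_S(T)` is invertible, since its eigenvalues `χ_S(μ)`, `μ ∈ σ(T)`, are nonzero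
  have hunit : IsUnit (aeval T S.charpoly) := by
    rw [← spectrum.zero_notMem_iff K, spectrum.map_polynomial_aeval_of_degree_pos T _
      (by simp [charpoly_degree_eq_dim, Fintype.card_pos])]
    rintro ⟨μ, hμT, hμS⟩
    exact Set.disjoint_left.mp hST (mem_spectrum_iff_isRoot_charpoly.mpr hμS) hμT
  have h := (SemiconjBy.aeval hX.symm S.charpoly).eq
  rw [aeval_self_charpoly, zero_mul] at h
  exact hunit.mul_left_eq_zero.mp h

section Sqrt

variable {m 𝕜 : Type*} [Fintype m] [RCLike 𝕜] [DecidableEq m] {A : Matrix m m 𝕜}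

lemma Matrix.PosSemidef.sqrt_mul_self (hA : A.PosSemidef) : hA.sqrt * hA.sqrt = A := by
  have hsqrt : hA.sqrt = Unitary.conjStarAlgAut 𝕜 _ hA.isHermitian.eigenvectorUnitary
      (diagonal ((↑) ∘ (√·) ∘ hA.isHermitian.eigenvalues)) := rfl
  conv_rhs => rw [hA.isHermitian.spectral_theorem]
  rw [hsqrt, ← map_mul, diagonal_mul_diagonal]
  congr 2 with i
  simp [← RCLike.ofReal_mul, Real.mul_self_sqrt (hA.eigenvalues_nonneg i)]

lemma Matrix.PosDef.posDef_sqrt (hA : A.PosDef) : hA.posSemidef.sqrt.PosDef :=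
  hA.posSemidef.posSemidef_sqrt.posDef_iff_isUnit.mpr <|
    isUnit_of_mul_isUnit_left (hA.posSemidef.sqrt_mul_self ▸ hA.isUnit)

end Sqrt

namespace Heron

variable {n : ℕ} {M S T : Matrix (Fin n) (Fin n) ℂ}

theorem hasPosSpectrum_of_posDef (hM : M.PosDef) : HasPosSpectrum M := by
  rintro _ hz
  obtain ⟨_, ⟨i, rfl⟩, rfl⟩ := hM.isHermitian.spectrum_eq_image_range ▸ hz
  simpa using hM.eigenvalues_pos i

theorem hasPosSpectrum_units_conjugate (u : (Matrix (Fin n) (Fin n) ℂ)ˣ) :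
    HasPosSpectrum (u * M * u⁻¹ : Matrix (Fin n) (Fin n) ℂ) ↔ HasPosSpectrum M := by
  simp only [HasPosSpectrum, spectrum.units_conjugate]

theorem HasPosSpectrum.conjTranspose (h : HasPosSpectrum M) : HasPosSpectrum Mᴴ := by
  intro z hz
  rw [← star_eq_conjTranspose, spectrum.map_star, Set.mem_star] at hz
  simpa using h _ hz

theorem HasPosSpectrum.disjoint_spectrum_neg (hS : HasPosSpectrum S) (hT : HasPosSpectrum T) :
    Disjoint (spectrum ℂ S) (spectrum ℂ (-T)) := by
  refine Set.disjoint_left.mpr fun z hzS hzT => ?_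
  rw [← spectrum.neg_eq, Set.mem_neg] at hzT
  have hzS_re := (hS z hzS).1
  have hzT_re := (hT _ hzT).1
  rw [Complex.neg_re] at hzT_re
  linarith

theorem HasPosSpectrum.eq_of_mul_self_eq (hS : HasPosSpectrum S) (hT : HasPosSpectrum T)
    (h : S * S = T * T) : S = T := by
  have hX : S * (S - T) = (S - T) * -T := by
    rw [← sub_eq_zero, ← sub_eq_zero.mpr h]
    noncomm_ring
  exact sub_eq_zero.mp <|
    eq_zero_of_mul_eq_mul_of_disjoint_spectrum (hS.disjoint_spectrum_neg hT) hX

theorem isPrincipalSqrt_sqrt_of_posDef (hM : M.PosDef) :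
    IsPrincipalSqrt M hM.posSemidef.sqrt :=
  ⟨hM.posSemidef.sqrt_mul_self, hasPosSpectrum_of_posDef hM.posDef_sqrt⟩

theorem IsPrincipalSqrt.units_conjugate (h : IsPrincipalSqrt M S)
    (u : (Matrix (Fin n) (Fin n) ℂ)ˣ) :
    IsPrincipalSqrt (u * M * u⁻¹ : Matrix (Fin n) (Fin n) ℂ) (u * S * u⁻¹) := by
  refine ⟨?_, (hasPosSpectrum_units_conjugate u).mpr h.2⟩
  simp only [← h.1, mul_assoc, Units.inv_mul_cancel_left]

theorem IsPrincipalSqrt.conjTranspose (h : IsPrincipalSqrt M S) : IsPrincipalSqrt Mᴴ Sᴴ :=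
  ⟨by rw [← conjTranspose_mul, h.1], h.2.conjTranspose⟩

/-- With `R = A^{1/2}`, `A B = R (R B R) R⁻¹`. -/
theorem exists_units_conjugate_posDef_eq_mul {A B : Matrix (Fin n) (Fin n) ℂ} (hA : A.PosDef)
    (hB : B.PosDef) : ∃ (u : (Matrix (Fin n) (Fin n) ℂ)ˣ) (P : Matrix (Fin n) (Fin n) ℂ),
      P.PosDef ∧ (u * P * u⁻¹ : Matrix (Fin n) (Fin n) ℂ) = A * B := by
  set R := hA.posSemidef.sqrt
  have hR : R.PosDef := hA.posDef_sqrt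
  obtain ⟨u, hu⟩ := hR.isUnit
  refine ⟨u, R * B * R, ?_, ?_⟩
  · have h := hR.isUnit.posDef_star_left_conjugate_iff.mpr hB
    rwa [star_eq_conjTranspose, hR.isHermitian.eq] at h
  · have hRR : R * R = A := hA.posSemidef.sqrt_mul_self
    rw [← hRR, ← hu]
    simp only [mul_assoc, Units.mul_inv, mul_one]

/-- `AB` has positive spectrum, its principal square root exists
uniquely, and the adjoint of `(AB)^{1/2}` is `(BA)^{1/2}`; in particular
`(AB)^{1/2} + (BA)^{1/2}` is Hermitian. -/
theorem principal_sqrt_of_product {n : ℕ} (A B : Matrix (Fin n) (Fin n) ℂ)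
    (hA : A.PosDef) (hB : B.PosDef) :
    HasPosSpectrum (A * B) ∧
    (∃! S : Matrix (Fin n) (Fin n) ℂ, IsPrincipalSqrt (A * B) S) ∧
    ∀ S : Matrix (Fin n) (Fin n) ℂ, IsPrincipalSqrt (A * B) S →
      IsPrincipalSqrt (B * A) Sᴴ ∧ (S + Sᴴ).IsHermitian := by
  obtain ⟨u, P, hP, hAB⟩ := exists_units_conjugate_posDef_eq_mul hA hB
  have hS₀ : IsPrincipalSqrt (A * B) (u * hP.posSemidef.sqrt * u⁻¹) :=
    hAB ▸ (isPrincipalSqrt_sqrt_of_posDef hP).units_conjugate u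
  refine ⟨hAB ▸ (hasPosSpectrum_units_conjugate u).mpr (hasPosSpectrum_of_posDef hP),
    ⟨_, hS₀, fun S hS => hS.2.eq_of_mul_self_eq hS₀.2 (hS.1.trans hS₀.1.symm)⟩,
    fun S hS => ⟨?_, isHermitian_add_transpose_self S⟩⟩
  simpa [hA.isHermitian.eq, hB.isHermitian.eq] using hS.conjTranspose

end Heron
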